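/- arXiv:0811.4341 — 11 statements merged into one kernel-verified Lean document; each statement's English description precedes it below -/
import Mathlib

section
/- Let B be an SSD space and A ⊆ B a maximally q-positive set. Then E^A satisfies the transportation formula: for all ε₁, ε₂ ≥ 0, b¹ ∈ E^A(ε₁), b² ∈ E^A(ε₂) and α₁, α₂ ≥ 0 with α₁ + α₂ = 1, one has ε := α₁ε₁ + α₂ε₂ + α₁α₂ q(b¹−b²) ≥ 0 and α₁b¹ + α₂b² ∈ E^A(ε). -/
def QPositive {B : Type*} [AddCommGroup B] (q : B → ℝ) (A : Set B) : Prop :=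
  A.Nonempty ∧ ∀ b ∈ A, ∀ c ∈ A, 0 ≤ q (b - c)

def MaxQPositive {B : Type*} [AddCommGroup B] (q : B → ℝ) (A : Set B) : Prop :=
  QPositive q A ∧ ∀ A' : Set B, QPositive q A' → A ⊆ A' → A' = A

def EnlA {B : Type*} [AddCommGroup B] (q : B → ℝ) (A : Set B) (ε : ℝ) : Set B :=
  {b : B | ∀ c ∈ A, -ε ≤ q (b - c)}

/-!
Since `α₁ + α₂ = 1`, the quadratic form satisfies
`q (α₁ • u + α₂ • v) = α₁ q u + α₂ q v - α₁ α₂ q (u - v)`; applied to `u = b₁ - c`, `v = b₂ - c`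
this puts the convex combination in `E^A(ε)`. If `ε` were negative, the combination would be
`q`-positive with respect to all of `A`, hence in `A` by maximality, and then `-ε ≤ q 0 = 0`.
-/

section QuadraticForm

variable {B : Type*} [AddCommGroup B] [Module ℝ B] (brk : B →ₗ[ℝ] B →ₗ[ℝ] ℝ)
  {q : B → ℝ} (hq : ∀ b : B, q b = brk b b / 2)
include hq

lemma quadratic_zero : q 0 = 0 := by
  simp [hq]

lemma quadratic_even : Function.Even q := fun b => by
  simp [hq]

lemma quadratic_convexComb (u v : B) {α₁ α₂ : ℝ} (hα : α₁ + α₂ = 1) :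
    q (α₁ • u + α₂ • v) = α₁ * q u + α₂ * q v - α₁ * α₂ * q (u - v) := by
  simp only [hq, map_add, map_sub, map_smul, LinearMap.add_apply, LinearMap.sub_apply,
    LinearMap.smul_apply, smul_eq_mul]
  linear_combination (α₁ * brk u u + α₂ * brk v v) / 2 * hα

lemma convexComb_mem_EnlA {A : Set B} {ε₁ ε₂ : ℝ} {b₁ b₂ : B}
    (hb₁ : b₁ ∈ EnlA q A ε₁) (hb₂ : b₂ ∈ EnlA q A ε₂)
    {α₁ α₂ : ℝ} (hα₁ : 0 ≤ α₁) (hα₂ : 0 ≤ α₂) (hα : α₁ + α₂ = 1) :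
    α₁ • b₁ + α₂ • b₂ ∈ EnlA q A (α₁ * ε₁ + α₂ * ε₂ + α₁ * α₂ * q (b₁ - b₂)) := by
  intro c hc
  have hsplit : α₁ • b₁ + α₂ • b₂ - c = α₁ • (b₁ - c) + α₂ • (b₂ - c) := by
    conv_lhs => rw [← one_smul ℝ c, ← hα, add_smul]
    rw [smul_sub, smul_sub]
    abel
  rw [hsplit, quadratic_convexComb brk hq _ _ hα, sub_sub_sub_cancel_right]
  linarith [mul_le_mul_of_nonneg_left (hb₁ c hc) hα₁, mul_le_mul_of_nonneg_left (hb₂ c hc) hα₂]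

end QuadraticForm

section Maximality

variable {B : Type*} [AddCommGroup B] {q : B → ℝ} {A : Set B}

lemma QPositive.insert (hA : QPositive q A) (hq0 : q 0 = 0) (hqeven : Function.Even q) {b : B}
    (hb : ∀ c ∈ A, 0 ≤ q (b - c)) : QPositive q (insert b A) := by
  refine ⟨Set.insert_nonempty b A, ?_⟩
  rintro x (rfl | hx) y (rfl | hy)
  · simp [hq0]
  · exact hb y hy
  · rw [← neg_sub, hqeven]
    exact hb x hx
  · exact hA.2 x hx y hy

lemma MaxQPositive.mem_of_forall_nonneg (hA : MaxQPositive q A) (hq0 : q 0 = 0)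
    (hqeven : Function.Even q) {b : B} (hb : ∀ c ∈ A, 0 ≤ q (b - c)) : b ∈ A := by
  rw [← hA.2 _ (hA.1.insert hq0 hqeven hb) (Set.subset_insert b A)]
  exact Set.mem_insert b A

lemma MaxQPositive.nonneg_of_mem_EnlA (hA : MaxQPositive q A) (hq0 : q 0 = 0)
    (hqeven : Function.Even q) {ε : ℝ} {b : B} (hb : b ∈ EnlA q A ε) : 0 ≤ ε := by
  by_contra! hε
  have hbA : b ∈ A :=
    hA.mem_of_forall_nonneg hq0 hqeven fun c hc => (neg_pos.2 hε).le.trans (hb c hc)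
  have := hb b hbA
  rw [sub_self, hq0] at this
  linarith

end Maximality

theorem EnlA_transportation_formula_general
    (B : Type*) [AddCommGroup B] [Module ℝ B]
    (brk : B →ₗ[ℝ] B →ₗ[ℝ] ℝ)
    (q : B → ℝ) (hq : ∀ b : B, q b = brk b b / 2)
    (A : Set B) (hA : MaxQPositive q A)
    (ε₁ ε₂ : ℝ)
    (b₁ b₂ : B) (hb₁ : b₁ ∈ EnlA q A ε₁) (hb₂ : b₂ ∈ EnlA q A ε₂)
    (α₁ α₂ : ℝ) (hα₁ : 0 ≤ α₁) (hα₂ : 0 ≤ α₂) (hα : α₁ + α₂ = 1) :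
    0 ≤ α₁ * ε₁ + α₂ * ε₂ + α₁ * α₂ * q (b₁ - b₂) ∧
      α₁ • b₁ + α₂ • b₂ ∈ EnlA q A (α₁ * ε₁ + α₂ * ε₂ + α₁ * α₂ * q (b₁ - b₂)) := by
  have hmem := convexComb_mem_EnlA brk hq hb₁ hb₂ hα₁ hα₂ hα
  exact ⟨hA.nonneg_of_mem_EnlA (quadratic_zero brk hq) (quadratic_even brk hq) hmem, hmem⟩

theorem EnlA_transportation_formula
    (B : Type*) [AddCommGroup B] [Module ℝ B] [Nontrivial B]
    (brk : B →ₗ[ℝ] B →ₗ[ℝ] ℝ) (hsym : ∀ b c : B, brk b c = brk c b)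
    (q : B → ℝ) (hq : ∀ b : B, q b = brk b b / 2)
    (A : Set B) (hA : MaxQPositive q A)
    (ε₁ ε₂ : ℝ) (hε₁ : 0 ≤ ε₁) (hε₂ : 0 ≤ ε₂)
    (b₁ b₂ : B) (hb₁ : b₁ ∈ EnlA q A ε₁) (hb₂ : b₂ ∈ EnlA q A ε₂)
    (α₁ α₂ : ℝ) (hα₁ : 0 ≤ α₁) (hα₂ : 0 ≤ α₂) (hα : α₁ + α₂ = 1) :
    0 ≤ α₁ * ε₁ + α₂ * ε₂ + α₁ * α₂ * q (b₁ - b₂) ∧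
      α₁ • b₁ + α₂ • b₂ ∈ EnlA q A (α₁ * ε₁ + α₂ * ε₂ + α₁ * α₂ * q (b₁ - b₂)) :=
  EnlA_transportation_formula_general B brk q hq A hA ε₁ ε₂ b₁ b₂ hb₁ hb₂ α₁ α₂ hα₁ hα₂ hα
end

section
/- Let B be an SSD space, A ⊆ B maximally q-positive, and let ε₁, ε₂ ≥ 0, b¹ ∈ E^A(ε₁), b² ∈ E^A(ε₂), α₁, α₂ ≥ 0 with α₁ + α₂ = 1, and c ∈ A. Then q(α₁b¹ + α₂b² − c) ≥ −α₁ε₁ − α₂ε₂ − α₁α₂ q(b¹−b²). -/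
/-! Writing `x = b₁ - c` and `y = b₂ - c`, any quadratic map satisfies
`Q (α₁ x + α₂ y) = α₁ Q x + α₂ Q y - α₁ α₂ Q (x - y)` when `α₁ + α₂ = 1`; the estimate follows
by bounding `Q x ≥ -ε₁` and `Q y ≥ -ε₂` with the nonnegative weights `α₁`, `α₂`. -/

namespace QuadraticMap

variable {R M N : Type*} [CommRing R] [AddCommGroup M] [AddCommGroup N] [Module R M] [Module R N]

theorem map_smul_add_smul_of_add_eq_one (Q : QuadraticMap R M N) (x y : M) {a b : R}
    (hab : a + b = 1) : Q (a • x + b • y) = a • Q x + b • Q y - (a * b) • Q (x - y) := by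
  obtain rfl : b = 1 - a := eq_sub_of_add_eq' hab
  rw [sub_eq_add_neg x, QuadraticMap.map_add Q, QuadraticMap.map_add Q, Q.map_neg, Q.map_smul,
    Q.map_smul, polar_smul_left, polar_smul_right, polar_neg_right]
  module

end QuadraticMap

theorem EnlA_convex_combination_estimate_general
    (B : Type*) [AddCommGroup B] [Module ℝ B]
    (brk : B →ₗ[ℝ] B →ₗ[ℝ] ℝ)
    (q : B → ℝ) (hq : ∀ b : B, q b = brk b b / 2)
    (A : Set B)
    (ε₁ ε₂ : ℝ)
    (b₁ b₂ : B) (hb₁ : b₁ ∈ EnlA q A ε₁) (hb₂ : b₂ ∈ EnlA q A ε₂)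
    (α₁ α₂ : ℝ) (hα₁ : 0 ≤ α₁) (hα₂ : 0 ≤ α₂) (hα : α₁ + α₂ = 1)
    (c : B) (hc : c ∈ A) :
    -(α₁ * ε₁) - α₂ * ε₂ - α₁ * α₂ * q (b₁ - b₂) ≤ q (α₁ • b₁ + α₂ • b₂ - c) := by
  set Q : QuadraticForm ℝ B := (1 / 2 : ℝ) • LinearMap.BilinMap.toQuadraticMap brk
  obtain rfl : q = Q := funext fun b => by simp [Q, hq, div_eq_inv_mul]
  have hx : -ε₁ ≤ Q (b₁ - c) := hb₁ c hc
  have hy : -ε₂ ≤ Q (b₂ - c) := hb₂ c hc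
  rw [show α₁ • b₁ + α₂ • b₂ - c = α₁ • (b₁ - c) + α₂ • (b₂ - c) by
      linear_combination (norm := module) hα • c,
    show b₁ - b₂ = (b₁ - c) - (b₂ - c) by abel, Q.map_smul_add_smul_of_add_eq_one _ _ hα,
    smul_eq_mul, smul_eq_mul, smul_eq_mul]
  linarith [mul_le_mul_of_nonneg_left hx hα₁, mul_le_mul_of_nonneg_left hy hα₂]

theorem EnlA_convex_combination_estimate
    (B : Type*) [AddCommGroup B] [Module ℝ B] [Nontrivial B]
    (brk : B →ₗ[ℝ] B →ₗ[ℝ] ℝ) (hsym : ∀ b c : B, brk b c = brk c b)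
    (q : B → ℝ) (hq : ∀ b : B, q b = brk b b / 2)
    (A : Set B) (hA : MaxQPositive q A)
    (ε₁ ε₂ : ℝ) (hε₁ : 0 ≤ ε₁) (hε₂ : 0 ≤ ε₂)
    (b₁ b₂ : B) (hb₁ : b₁ ∈ EnlA q A ε₁) (hb₂ : b₂ ∈ EnlA q A ε₂)
    (α₁ α₂ : ℝ) (hα₁ : 0 ≤ α₁) (hα₂ : 0 ≤ α₂) (hα : α₁ + α₂ = 1)
    (c : B) (hc : c ∈ A) :
    -(α₁ * ε₁) - α₂ * ε₂ - α₁ * α₂ * q (b₁ - b₂) ≤ q (α₁ • b₁ + α₂ • b₂ - c) :=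
  EnlA_convex_combination_estimate_general B brk q hq A ε₁ ε₂ b₁ b₂ hb₁ hb₂ α₁ α₂ hα₁ hα₂ hα c hc
end

section
/- Let B be an SSD space and E : ℝ₊ ⇉ B a multifunction. Define Ψ : ℝ × B → ℝ × B by Ψ(ε,b) = (ε + q(b), b). Then E satisfies the transportation formula if and only if the image Ψ(G(E)) of the graph of E (with graph G(E) = {(ε,b) : b ∈ E(ε)}) is a convex subset of ℝ × B. -/
/-!
The shear `Ψ(ε, b) = (ε + q b, b)` is a bijection of `ℝ × B`, and because `q` comes from a
bilinear form it satisfies `α β q(b₁ - b₂) + q(α b₁ + β b₂) = α q b₁ + β q b₂` whenever `α + β = 1`.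
Hence the convex combination `α Ψ(ε₁, b₁) + β Ψ(ε₂, b₂)` is exactly `Ψ(ε, α b₁ + β b₂)` with `ε` the
transported parameter of the transportation formula, and convexity of `Ψ(G(E))` says precisely
that this point lies in `G(E)`.
-/

/-- The transportation formula for a multifunction `E : ℝ₊ ⇉ B`. -/
def TransportationFormula {B : Type*} [AddCommGroup B] [Module ℝ B]
    (q : B → ℝ) (E : ℝ → Set B) : Prop :=
  ∀ ε₁ ε₂ : ℝ, 0 ≤ ε₁ → 0 ≤ ε₂ → ∀ b₁ ∈ E ε₁, ∀ b₂ ∈ E ε₂,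
    ∀ α₁ α₂ : ℝ, 0 ≤ α₁ → 0 ≤ α₂ → α₁ + α₂ = 1 →
      0 ≤ α₁ * ε₁ + α₂ * ε₂ + α₁ * α₂ * q (b₁ - b₂) ∧
        α₁ • b₁ + α₂ • b₂ ∈ E (α₁ * ε₁ + α₂ * ε₂ + α₁ * α₂ * q (b₁ - b₂))

/-- The graph of a multifunction `E : ℝ₊ ⇉ B`. -/
def MGraph {B : Type*} (E : ℝ → Set B) : Set (ℝ × B) :=
  {p : ℝ × B | 0 ≤ p.1 ∧ p.2 ∈ E p.1}

lemma LinearMap.convex_combo_apply_self {R M : Type*} [CommRing R] [AddCommGroup M] [Module R M]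
    (f : M →ₗ[R] M →ₗ[R] R) (x y : M) {a b : R} (hab : a + b = 1) :
    a * b * f (x - y) (x - y) + f (a • x + b • y) (a • x + b • y) = a * f x x + b * f y y := by
  obtain rfl : b = 1 - a := eq_sub_of_add_eq' hab
  simp only [map_sub, map_add, map_smul, LinearMap.sub_apply, LinearMap.add_apply,
    LinearMap.smul_apply, smul_eq_mul]
  ring

section Shear

variable {B : Type*} (q : B → ℝ)

def shear (p : ℝ × B) : ℝ × B := (p.1 + q p.2, p.2)

lemma shear_injective : Function.Injective (shear q) := by
  rintro ⟨ε₁, b₁⟩ ⟨ε₂, b₂⟩ h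
  simp only [shear, Prod.mk.injEq] at h
  obtain ⟨h₁, rfl⟩ := h
  simpa using h₁

variable [AddCommGroup B] [Module ℝ B] {q}

lemma convex_combo_shear
    (hq : ∀ (x y : B) (a b : ℝ), a + b = 1 → a * b * q (x - y) + q (a • x + b • y) = a * q x + b * q y)
    (p₁ p₂ : ℝ × B) {α β : ℝ} (hαβ : α + β = 1) :
    α • shear q p₁ + β • shear q p₂ =
      shear q (α * p₁.1 + β * p₂.1 + α * β * q (p₁.2 - p₂.2), α • p₁.2 + β • p₂.2) := by
  have h := hq p₁.2 p₂.2 α β hαβ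
  ext
  · simp only [shear, Prod.fst_add, Prod.smul_fst, smul_eq_mul]
    linarith
  · rfl

lemma convex_shear_image_iff
    (hq : ∀ (x y : B) (a b : ℝ), a + b = 1 → a * b * q (x - y) + q (a • x + b • y) = a * q x + b * q y)
    (S : Set (ℝ × B)) :
    Convex ℝ (shear q '' S) ↔ ∀ p₁ ∈ S, ∀ p₂ ∈ S, ∀ α β : ℝ, 0 ≤ α → 0 ≤ β → α + β = 1 →
      (α * p₁.1 + β * p₂.1 + α * β * q (p₁.2 - p₂.2), α • p₁.2 + β • p₂.2) ∈ S := by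
  simp only [Convex, StarConvex, Set.forall_mem_image]
  refine forall₂_congr fun p₁ _ ↦ forall₂_congr fun p₂ _ ↦ forall_congr' fun α ↦
    forall_congr' fun β ↦ imp_congr_right fun _ ↦ imp_congr_right fun _ ↦ forall_congr' fun hαβ ↦ ?_
  rw [convex_combo_shear hq p₁ p₂ hαβ, (shear_injective q).mem_set_image]

end Shear

theorem transportation_iff_convex_image_general
    (B : Type*) [AddCommGroup B] [Module ℝ B]
    (brk : B →ₗ[ℝ] B →ₗ[ℝ] ℝ)
    (q : B → ℝ) (hq : ∀ b : B, q b = brk b b / 2)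
    (E : ℝ → Set B) :
    TransportationFormula q E ↔
      Convex ℝ ((fun p : ℝ × B => (p.1 + q p.2, p.2)) '' MGraph E) := by
  have hcombo (x y : B) (a b : ℝ) (hab : a + b = 1) :
      a * b * q (x - y) + q (a • x + b • y) = a * q x + b * q y := by
    simp only [hq]
    linarith [brk.convex_combo_apply_self x y hab]
  change _ ↔ Convex ℝ (shear q '' MGraph E)
  rw [convex_shear_image_iff hcombo]
  simp only [TransportationFormula, MGraph, Set.mem_ofPred_eq, Prod.forall]
  constructor
  · rintro h ε₁ b₁ ⟨hε₁, hb₁⟩ ε₂ b₂ ⟨hε₂, hb₂⟩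
    exact h ε₁ ε₂ hε₁ hε₂ b₁ hb₁ b₂ hb₂
  · intro h ε₁ ε₂ hε₁ hε₂ b₁ hb₁ b₂ hb₂
    exact h ε₁ b₁ ⟨hε₁, hb₁⟩ ε₂ b₂ ⟨hε₂, hb₂⟩

theorem transportation_iff_convex_image
    (B : Type*) [AddCommGroup B] [Module ℝ B] [Nontrivial B]
    (brk : B →ₗ[ℝ] B →ₗ[ℝ] ℝ) (hsym : ∀ b c : B, brk b c = brk c b)
    (q : B → ℝ) (hq : ∀ b : B, q b = brk b b / 2)
    (E : ℝ → Set B) :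
    TransportationFormula q E ↔
      Convex ℝ ((fun p : ℝ × B => (p.1 + q p.2, p.2)) '' MGraph E) :=
  transportation_iff_convex_image_general B brk q hq E
end

section
/- Let B be an SSD space and E : ℝ₊ ⇉ B. If E satisfies the transportation formula, then E satisfies the n-point transportation formula: for all n ≥ 1, εᵢ ≥ 0, bⁱ ∈ E(εᵢ), αᵢ ≥ 0 (i = 1,...,n) with Σαᵢ = 1, one has ε := Σᵢ αᵢεᵢ + Σᵢ αᵢ q(bⁱ − Σⱼ αⱼbʲ) ≥ 0 and Σᵢ αᵢbⁱ ∈ E(ε). -/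
open scoped BigOperators

/-! Write `t = ε + q b`. The identity
`α₁ α₂ q (b₁ - b₂) = α₁ q b₁ + α₂ q b₂ - q (α₁ b₁ + α₂ b₂)` (for `α₁ + α₂ = 1`) turns the
transportation formula into convexity of the set of pairs `(b, t)` with `b ∈ E (t - q b)`,
`t - q b ≥ 0`. Its closure under `n`-fold convex combinations is then `Convex.sum_mem`, and the
variance identity `∑ αᵢ q (bⁱ - b̄) = ∑ αᵢ q bⁱ - q b̄` translates back. -/

namespace QuadraticMap

variable {R M N : Type*} [CommRing R] [AddCommGroup M] [AddCommGroup N] [Module R M] [Module R N]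
  (Q : QuadraticMap R M N)

theorem map_sub_eq_sub_polar (x y : M) : Q (x - y) = Q x + Q y - polar Q x y := by
  rw [sub_eq_add_neg, QuadraticMap.map_add Q, QuadraticMap.map_neg, polar_neg_right]
  abel

theorem smul_map_sub_of_add_eq_one {a c : R} (h : a + c = 1) (x y : M) :
    (a * c) • Q (x - y) = a • Q x + c • Q y - Q (a • x + c • y) := by
  obtain rfl : a = 1 - c := eq_sub_of_add_eq h
  rw [map_sub_eq_sub_polar, QuadraticMap.map_add Q, QuadraticMap.map_smul, QuadraticMap.map_smul,
    polar_smul_left, polar_smul_right]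
  module

theorem sum_smul_map_sub_sum_smul {ι : Type*} (s : Finset ι) (w : ι → R) (x : ι → M)
    (hw : ∑ i ∈ s, w i = 1) :
    ∑ i ∈ s, w i • Q (x i - ∑ j ∈ s, w j • x j) =
      ∑ i ∈ s, w i • Q (x i) - Q (∑ j ∈ s, w j • x j) := by
  set m := ∑ j ∈ s, w j • x j
  have hpolar : ∑ i ∈ s, w i • polar Q (x i) m = 2 • Q m := by
    simp only [← polarBilin_apply_apply, ← LinearMap.map_smul₂, ← LinearMap.sum_apply, ← map_sum]
    rw [polarBilin_apply_apply, polar_self]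
  simp only [map_sub_eq_sub_polar, smul_sub, smul_add, Finset.sum_sub_distrib,
    Finset.sum_add_distrib, ← Finset.sum_smul, hw, one_smul, hpolar]
  abel

end QuadraticMap

def transportSet {B : Type*} (q : B → ℝ) (E : ℝ → Set B) : Set (B × ℝ) :=
  {p | 0 ≤ p.2 - q p.1 ∧ p.1 ∈ E (p.2 - q p.1)}

theorem convex_transportSet {B : Type*} [AddCommGroup B] [Module ℝ B] (Q : QuadraticForm ℝ B)
    {E : ℝ → Set B} (hE : TransportationFormula Q E) : Convex ℝ (transportSet Q E) := by
  rintro ⟨b₁, t₁⟩ ⟨hε₁, hb₁⟩ ⟨b₂, t₂⟩ ⟨hε₂, hb₂⟩ a c ha hc hac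
  have hshift : a * (t₁ - Q b₁) + c * (t₂ - Q b₂) + a * c * Q (b₁ - b₂) =
      (a • (b₁, t₁) + c • (b₂, t₂)).2 - Q (a • (b₁, t₁) + c • (b₂, t₂)).1 := by
    have := Q.smul_map_sub_of_add_eq_one hac b₁ b₂
    simp only [smul_eq_mul] at this
    simp only [Prod.fst_add, Prod.snd_add, Prod.smul_fst, Prod.smul_snd, smul_eq_mul]
    linear_combination this
  rw [transportSet, Set.mem_ofPred_eq, ← hshift]
  exact hE _ _ hε₁ hε₂ b₁ hb₁ b₂ hb₂ a c ha hc hac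

theorem transportation_implies_n_point_transportation_general
    (B : Type*) [AddCommGroup B] [Module ℝ B]
    (brk : B →ₗ[ℝ] B →ₗ[ℝ] ℝ)
    (q : B → ℝ) (hq : ∀ b : B, q b = brk b b / 2)
    (E : ℝ → Set B) (hE : TransportationFormula q E)
    (n : ℕ) (ε : Fin n → ℝ) (hε : ∀ i, 0 ≤ ε i)
    (b : Fin n → B) (hb : ∀ i, b i ∈ E (ε i))
    (α : Fin n → ℝ) (hα : ∀ i, 0 ≤ α i) (hαs : ∑ i, α i = 1) :
    0 ≤ ∑ i, α i * ε i + ∑ i, α i * q (b i - ∑ j, α j • b j) ∧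
      (∑ i, α i • b i) ∈ E (∑ i, α i * ε i + ∑ i, α i * q (b i - ∑ j, α j • b j)) := by
  set Q : QuadraticForm ℝ B := (1 / 2 : ℝ) • LinearMap.BilinMap.toQuadraticMap brk
  obtain rfl : q = Q := funext fun x => by simp [Q, hq, div_eq_inv_mul]
  have hmem := (convex_transportSet Q hE).sum_mem (fun i _ => hα i) hαs
    (z := fun i => (b i, ε i + Q (b i))) fun i _ => by simpa [transportSet] using ⟨hε i, hb i⟩
  have hvar := Q.sum_smul_map_sub_sum_smul Finset.univ α b hαs
  simp only [smul_eq_mul] at hvar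
  have hfst : (∑ i, α i • (b i, ε i + Q (b i))).1 = ∑ i, α i • b i := by
    simp only [Prod.fst_sum, Prod.smul_fst]
  have hsnd : ∑ i, α i * ε i + ∑ i, α i * Q (b i - ∑ j, α j • b j) =
      (∑ i, α i • (b i, ε i + Q (b i))).2 - Q (∑ i, α i • b i) := by
    simp only [Prod.snd_sum, Prod.smul_snd, smul_eq_mul, hvar, mul_add, Finset.sum_add_distrib]
    ring
  rw [hsnd, ← hfst]
  exact hmem

theorem transportation_implies_n_point_transportation
    (B : Type*) [AddCommGroup B] [Module ℝ B] [Nontrivial B]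
    (brk : B →ₗ[ℝ] B →ₗ[ℝ] ℝ) (hsym : ∀ b c : B, brk b c = brk c b)
    (q : B → ℝ) (hq : ∀ b : B, q b = brk b b / 2)
    (E : ℝ → Set B) (hE : TransportationFormula q E)
    (n : ℕ) (hn : 1 ≤ n) (ε : Fin n → ℝ) (hε : ∀ i, 0 ≤ ε i)
    (b : Fin n → B) (hb : ∀ i, b i ∈ E (ε i))
    (α : Fin n → ℝ) (hα : ∀ i, 0 ≤ α i) (hαs : ∑ i, α i = 1) :
    0 ≤ ∑ i, α i * ε i + ∑ i, α i * q (b i - ∑ j, α j • b j) ∧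
      (∑ i, α i • b i) ∈ E (∑ i, α i * ε i + ∑ i, α i * q (b i - ∑ j, α j • b j)) :=
  transportation_implies_n_point_transportation_general B brk q hq E hE n ε hε b hb α hα hαs
end

section
/- Let B be an SSD space and A ⊆ B a maximally q-positive set. Then E^A is the biggest element of 𝓔(A) with respect to graph inclusion: for every E ∈ 𝓔(A), G(E) ⊆ G(E^A). -/
/-- Membership of the multifunction `E` in the family `𝓔(A)`. -/
def MemEnlFamily {B : Type*} [AddCommGroup B] [Module ℝ B]
    (q : B → ℝ) (A : Set B) (E : ℝ → Set B) : Prop :=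
  (∀ ε : ℝ, 0 ≤ ε → A ⊆ E ε) ∧
    (∀ ε₁ ε₂ : ℝ, 0 ≤ ε₁ → ε₁ ≤ ε₂ → E ε₁ ⊆ E ε₂) ∧
      TransportationFormula q E

/-! Pair `b ∈ E ε` with `c ∈ A ⊆ E 0` using weights `1 - s` and `s`: the transportation formula
forces `0 ≤ (1 - s) * (ε + s * q (b - c))` for every `s ∈ (0, 1)`, and letting `s → 1` gives
`-ε ≤ q (b - c)`. -/

open Filter Topology

lemma nonneg_add_of_forall_mul_nonneg {ε Q : ℝ} (h : ∀ s, 0 < s → s < 1 → 0 ≤ ε + s * Q) :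
    0 ≤ ε + Q := by
  have hlim : Tendsto (fun s => ε + s * Q) (𝓝[<] 1) (𝓝 (ε + 1 * Q)) :=
    ((continuous_const.add (continuous_id.mul continuous_const)).tendsto 1).mono_left
      nhdsWithin_le_nhds
  have hev : ∀ᶠ s in 𝓝[<] (1 : ℝ), 0 ≤ ε + s * Q := by
    filter_upwards [Ioo_mem_nhdsLT one_pos] with s hs using h s hs.1 hs.2
  simpa using ge_of_tendsto hlim hev

lemma TransportationFormula.neg_le_of_mem_zero {B : Type*} [AddCommGroup B] [Module ℝ B]
    {q : B → ℝ} {E : ℝ → Set B} (hT : TransportationFormula q E) {ε : ℝ} (hε : 0 ≤ ε)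
    {b c : B} (hb : b ∈ E ε) (hc : c ∈ E 0) : -ε ≤ q (b - c) := by
  suffices 0 ≤ ε + q (b - c) by linarith
  refine nonneg_add_of_forall_mul_nonneg fun s hs0 hs1 => ?_
  have hmix := (hT ε 0 hε le_rfl b hb c hc (1 - s) s (by linarith) hs0.le (by ring)).1
  have hfactor : 0 ≤ (1 - s) * (ε + s * q (b - c)) := by linarith
  exact nonneg_of_mul_nonneg_right hfactor (by linarith)

theorem EnlA_biggest_in_family_general
    (B : Type*) [AddCommGroup B] [Module ℝ B]
    (q : B → ℝ)
    (A : Set B)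
    (E : ℝ → Set B) (hE : MemEnlFamily q A E) :
    ∀ ε : ℝ, 0 ≤ ε → E ε ⊆ EnlA q A ε := by
  intro ε hε b hb c hc
  exact hE.2.2.neg_le_of_mem_zero hε hb (hE.1 0 le_rfl hc)

theorem EnlA_biggest_in_family
    (B : Type*) [AddCommGroup B] [Module ℝ B] [Nontrivial B]
    (brk : B →ₗ[ℝ] B →ₗ[ℝ] ℝ) (hsym : ∀ b c : B, brk b c = brk c b)
    (q : B → ℝ) (hq : ∀ b : B, q b = brk b b / 2)
    (A : Set B) (hA : MaxQPositive q A)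
    (E : ℝ → Set B) (hE : MemEnlFamily q A E) :
    ∀ ε : ℝ, 0 ≤ ε → E ε ⊆ EnlA q A ε :=
  EnlA_biggest_in_family_general B q A E hE
end

section
/- Let B be an SSD space, A ⊆ B a maximally q-positive set and E ∈ 𝓔(A). Then E(0) = ⋂_{ε>0} E(ε) = A. -/
section

variable {B : Type*} [AddCommGroup B] {q : B → ℝ}

theorem MaxQPositive.mem_of_forall_nonneg_s10 {A : Set B} (hA : MaxQPositive q A)
    (hneg : ∀ x, q (-x) = q x) (h0 : 0 ≤ q 0) {b : B} (hb : ∀ a ∈ A, 0 ≤ q (b - a)) :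
    b ∈ A := by
  have hpos : QPositive q (insert b A) := by
    refine ⟨Set.insert_nonempty b A, ?_⟩
    rintro x (rfl | hx) y (rfl | hy)
    · simpa using h0
    · exact hb y hy
    · rw [← neg_sub, hneg]; exact hb x hx
    · exact hA.1.2 x hx y hy
  rw [← hA.2 _ hpos (Set.subset_insert b A)]
  exact Set.mem_insert b A

variable [Module ℝ B] {E : ℝ → Set B}

theorem TransportationFormula.neg_two_mul_le {ε : ℝ} (hE : TransportationFormula q E)
    (hε : 0 ≤ ε) {b c : B} (hb : b ∈ E ε) (hc : c ∈ E 0) : -(2 * ε) ≤ q (b - c) := by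
  have := (hE ε 0 hε le_rfl b hb c hc (1 / 2) (1 / 2) (by norm_num) (by norm_num)
    (by norm_num)).1
  linarith

theorem MemEnlFamily.zero_subset_iInter_pos {A : Set B} (hE : MemEnlFamily q A E) :
    E 0 ⊆ ⋂ ε ∈ Set.Ioi (0 : ℝ), E ε :=
  Set.subset_iInter₂ fun ε hε => hE.2.1 0 ε le_rfl (le_of_lt hε)

theorem MemEnlFamily.iInter_pos_subset {A : Set B} (hE : MemEnlFamily q A E)
    (hA : MaxQPositive q A) (hneg : ∀ x, q (-x) = q x) (h0 : 0 ≤ q 0) :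
    (⋂ ε ∈ Set.Ioi (0 : ℝ), E ε) ⊆ A := by
  intro b hb
  rw [Set.mem_iInter₂] at hb
  refine hA.mem_of_forall_nonneg_s10 hneg h0 fun a ha => le_of_forall_pos_le_add fun ε hε => ?_
  have := hE.2.2.neg_two_mul_le (half_pos hε).le (hb _ (half_pos hε)) (hE.1 0 le_rfl ha)
  linarith

end

theorem enlargement_zero_eq_inter_eq_general
    (B : Type*) [AddCommGroup B] [Module ℝ B]
    (brk : B →ₗ[ℝ] B →ₗ[ℝ] ℝ)
    (q : B → ℝ) (hq : ∀ b : B, q b = brk b b / 2)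
    (A : Set B) (hA : MaxQPositive q A)
    (E : ℝ → Set B) (hE : MemEnlFamily q A E) :
    E 0 = A ∧ (⋂ ε ∈ Set.Ioi (0 : ℝ), E ε) = A := by
  have hneg : ∀ x, q (-x) = q x := fun x => by simp [hq]
  have h0 : 0 ≤ q 0 := by simp [hq]
  have hA0 : A ⊆ E 0 := hE.1 0 le_rfl
  have hE0 := hE.zero_subset_iInter_pos
  have hIA := hE.iInter_pos_subset hA hneg h0
  exact ⟨(hE0.trans hIA).antisymm hA0, hIA.antisymm (hA0.trans hE0)⟩

theorem enlargement_zero_eq_inter_eq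
    (B : Type*) [AddCommGroup B] [Module ℝ B] [Nontrivial B]
    (brk : B →ₗ[ℝ] B →ₗ[ℝ] ℝ) (hsym : ∀ b c : B, brk b c = brk c b)
    (q : B → ℝ) (hq : ∀ b : B, q b = brk b b / 2)
    (A : Set B) (hA : MaxQPositive q A)
    (E : ℝ → Set B) (hE : MemEnlFamily q A E) :
    E 0 = A ∧ (⋂ ε ∈ Set.Ioi (0 : ℝ), E ε) = A :=
  enlargement_zero_eq_inter_eq_general B brk q hq A hA E hE
end

section
/- Let B be a Banach SSD space and E : ℝ₊ ⇉ B a multifunction that is closed (its graph is closed) and nondecreasing. Define λ_E(b) = inf{ε ≥ 0 : b ∈ E(ε)}. Then: (i) the graph of E⁻¹ equals the epigraph of λ_E; (ii) λ_E is lower semicontinuous; (iii) λ_E ≥ 0; (iv) E(ε) = {b ∈ B : λ_E(b) ≤ ε} for all ε ≥ 0. Moreover λ_E is the unique function B → (−∞,+∞] satisfying (iii) and (iv). -/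
/-!
`λ_E(b) ≤ ε` holds exactly when `b ∈ E(δ)` for every `δ > ε` (monotonicity), and closedness of
the graph passes this to `δ = ε`. So the sublevel sets of `λ_E` are the closed sets `E(ε)`
(or empty below `0`), which gives lower semicontinuity; a nonnegative `[0,+∞]`-valued function
is determined by its sublevel sets at the levels `ε ≥ 0`, which gives uniqueness.
-/

open scoped Classical

/-- `λ_E(b) = inf {ε ≥ 0 : b ∈ E(ε)}`, with values in `[0,+∞]` and `inf ∅ = +∞`. -/
noncomputable def lamE {B : Type*} (E : ℝ → Set B) (b : B) : EReal :=
  sInf ((fun ε : ℝ => (ε : EReal)) '' {ε : ℝ | 0 ≤ ε ∧ b ∈ E ε})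

theorem EReal.le_of_forall_le_coe_imp {x y : EReal} (hy : 0 ≤ y)
    (h : ∀ r : ℝ, 0 ≤ r → y ≤ r → x ≤ r) : x ≤ y :=
  EReal.le_of_forall_lt_iff_le.mp fun r hr => h r (EReal.coe_nonneg.mp (hy.trans hr.le)) hr.le

theorem EReal.eq_of_forall_le_coe_iff {α : Type*} {f g : α → EReal}
    (hf : ∀ a, 0 ≤ f a) (hg : ∀ a, 0 ≤ g a)
    (h : ∀ a (r : ℝ), 0 ≤ r → (f a ≤ r ↔ g a ≤ r)) : f = g :=
  funext fun a => le_antisymm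
    (EReal.le_of_forall_le_coe_imp (hg a) fun r hr => (h a r hr).2)
    (EReal.le_of_forall_le_coe_imp (hf a) fun r hr => (h a r hr).1)

section lamE

variable {B : Type*} {E : ℝ → Set B}

theorem lamE_nonneg (E : ℝ → Set B) (b : B) : 0 ≤ lamE E b := by
  refine le_sInf ?_
  rintro _ ⟨ε, ⟨hε, -⟩, rfl⟩
  exact EReal.coe_nonneg.mpr hε

theorem lamE_le_of_mem {b : B} {ε : ℝ} (hε : 0 ≤ ε) (hb : b ∈ E ε) : lamE E b ≤ ε :=
  sInf_le ⟨ε, ⟨hε, hb⟩, rfl⟩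

theorem exists_mem_of_lamE_lt {b : B} {δ : ℝ} (h : lamE E b < δ) :
    ∃ ε, 0 ≤ ε ∧ b ∈ E ε ∧ ε < δ := by
  obtain ⟨_, ⟨ε, ⟨hε, hb⟩, rfl⟩, hεδ⟩ := sInf_lt_iff.mp h
  exact ⟨ε, hε, hb, EReal.coe_lt_coe_iff.mp hεδ⟩

variable [TopologicalSpace B]

theorem isClosed_setOf_mem_of_isClosed_graph
    (hclosed : IsClosed {p : ℝ × B | 0 ≤ p.1 ∧ p.2 ∈ E p.1}) (b : B) :
    IsClosed {ε : ℝ | 0 ≤ ε ∧ b ∈ E ε} :=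
  hclosed.preimage (continuous_id.prodMk continuous_const)

theorem isClosed_of_isClosed_graph
    (hclosed : IsClosed {p : ℝ × B | 0 ≤ p.1 ∧ p.2 ∈ E p.1}) {ε : ℝ} (hε : 0 ≤ ε) :
    IsClosed (E ε) := by
  have hpre : E ε = (fun b : B => (ε, b)) ⁻¹' {p : ℝ × B | 0 ≤ p.1 ∧ p.2 ∈ E p.1} := by
    ext b
    simp [hε]
  rw [hpre]
  exact hclosed.preimage (continuous_const.prodMk continuous_id)

theorem lamE_le_coe_iff
    (hclosed : IsClosed {p : ℝ × B | 0 ≤ p.1 ∧ p.2 ∈ E p.1})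
    (hmono : ∀ ε₁ ε₂ : ℝ, 0 ≤ ε₁ → ε₁ ≤ ε₂ → E ε₁ ⊆ E ε₂) {b : B} {ε : ℝ} :
    lamE E b ≤ ε ↔ 0 ≤ ε ∧ b ∈ E ε := by
  refine ⟨fun h => ?_, fun ⟨hε, hb⟩ => lamE_le_of_mem hε hb⟩
  have hIoi : Set.Ioi ε ⊆ {δ : ℝ | 0 ≤ δ ∧ b ∈ E δ} := by
    intro δ hδ
    obtain ⟨ε', hε', hb, hε'δ⟩ := exists_mem_of_lamE_lt (h.trans_lt (EReal.coe_lt_coe hδ))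
    exact ⟨hε'.trans hε'δ.le, hmono ε' δ hε' hε'δ.le hb⟩
  rw [← (isClosed_setOf_mem_of_isClosed_graph hclosed b).closure_subset_iff, closure_Ioi] at hIoi
  exact hIoi Set.self_mem_Ici

theorem isClosed_setOf_lamE_le
    (hclosed : IsClosed {p : ℝ × B | 0 ≤ p.1 ∧ p.2 ∈ E p.1})
    (hmono : ∀ ε₁ ε₂ : ℝ, 0 ≤ ε₁ → ε₁ ≤ ε₂ → E ε₁ ⊆ E ε₂) (r : ℝ) :
    IsClosed {b : B | lamE E b ≤ r} := by
  by_cases hr : 0 ≤ r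
  · simp only [lamE_le_coe_iff hclosed hmono, hr, true_and, Set.ofPred_mem_eq]
    exact isClosed_of_isClosed_graph hclosed hr
  · simp only [lamE_le_coe_iff hclosed hmono, hr, false_and, Set.ofPred_false, isClosed_empty]

theorem lowerSemicontinuous_lamE
    (hclosed : IsClosed {p : ℝ × B | 0 ≤ p.1 ∧ p.2 ∈ E p.1})
    (hmono : ∀ ε₁ ε₂ : ℝ, 0 ≤ ε₁ → ε₁ ≤ ε₂ → E ε₁ ⊆ E ε₂) :
    LowerSemicontinuous (lamE E) := by
  intro b y hy
  obtain ⟨r, hyr, hrb⟩ := EReal.lt_iff_exists_real_btwn.mp hy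
  have hnhds : {b' : B | lamE E b' ≤ r}ᶜ ∈ nhds b :=
    (isClosed_setOf_lamE_le hclosed hmono r).isOpen_compl.mem_nhds (not_le.mpr hrb)
  filter_upwards [hnhds] with b' hb'
  exact hyr.trans (not_le.mp hb')

end lamE

theorem lamE_properties_general
    (B : Type*) [NormedAddCommGroup B]
    (E : ℝ → Set B)
    (hclosed : IsClosed {p : ℝ × B | 0 ≤ p.1 ∧ p.2 ∈ E p.1})
    (hmono : ∀ ε₁ ε₂ : ℝ, 0 ≤ ε₁ → ε₁ ≤ ε₂ → E ε₁ ⊆ E ε₂) :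
    {p : B × ℝ | 0 ≤ p.2 ∧ p.1 ∈ E p.2} = {p : B × ℝ | lamE E p.1 ≤ (p.2 : EReal)} ∧
    LowerSemicontinuous (lamE E) ∧
    (∀ b : B, 0 ≤ lamE E b) ∧
    (∀ ε : ℝ, 0 ≤ ε → E ε = {b : B | lamE E b ≤ (ε : EReal)}) ∧
    ∀ g : B → EReal, (∀ b : B, 0 ≤ g b) →
      (∀ ε : ℝ, 0 ≤ ε → E ε = {b : B | g b ≤ (ε : EReal)}) → g = lamE E := by
  have hsublevel : ∀ ε : ℝ, 0 ≤ ε → E ε = {b : B | lamE E b ≤ (ε : EReal)} := fun ε hε => by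
    ext b
    simp [lamE_le_coe_iff hclosed hmono, hε]
  refine ⟨?_, lowerSemicontinuous_lamE hclosed hmono, lamE_nonneg E, hsublevel, ?_⟩
  · ext ⟨b, ε⟩
    exact (lamE_le_coe_iff hclosed hmono).symm
  · intro g hg hgE
    refine EReal.eq_of_forall_le_coe_iff hg (lamE_nonneg E) fun b r hr => ?_
    have hsets := (hgE r hr).symm.trans (hsublevel r hr)
    exact Set.ext_iff.mp hsets b

theorem lamE_properties
    (B : Type*) [NormedAddCommGroup B] [NormedSpace ℝ B] [CompleteSpace B] [Nontrivial B]
    (brk : B →ₗ[ℝ] B →ₗ[ℝ] ℝ) (hsym : ∀ b c : B, brk b c = brk c b)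
    (q : B → ℝ) (hq : ∀ b : B, q b = brk b b / 2)
    (hpos : ∀ b : B, 0 ≤ (1 / 2) * ‖b‖ ^ 2 + q b)
    (ι : B →L[ℝ] (B →L[ℝ] ℝ)) (hι : ∀ b c : B, ι c b = brk b c)
    (E : ℝ → Set B)
    (hclosed : IsClosed {p : ℝ × B | 0 ≤ p.1 ∧ p.2 ∈ E p.1})
    (hmono : ∀ ε₁ ε₂ : ℝ, 0 ≤ ε₁ → ε₁ ≤ ε₂ → E ε₁ ⊆ E ε₂) :
    {p : B × ℝ | 0 ≤ p.2 ∧ p.1 ∈ E p.2} = {p : B × ℝ | lamE E p.1 ≤ (p.2 : EReal)} ∧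
    LowerSemicontinuous (lamE E) ∧
    (∀ b : B, 0 ≤ lamE E b) ∧
    (∀ ε : ℝ, 0 ≤ ε → E ε = {b : B | lamE E b ≤ (ε : EReal)}) ∧
    ∀ g : B → EReal, (∀ b : B, 0 ≤ g b) →
      (∀ ε : ℝ, 0 ≤ ε → E ε = {b : B | g b ≤ (ε : EReal)}) → g = lamE E :=
  lamE_properties_general B E hclosed hmono
end

section
/- Let B be a Banach SSD space and A ⊆ B maximally q-positive. If h ∈ 𝓗(A), then A_h ∈ 𝓔_c(A) and Λ_{A_h} = h, where A_h(ε) := {b ∈ B : h(b) ≤ ε + q(b)}. -/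
/-- Membership in the family `𝓔_c(A)` of closed enlargements. -/
def MemEnlFamilyClosed {B : Type*} [AddCommGroup B] [Module ℝ B] [TopologicalSpace B]
    (q : B → ℝ) (A : Set B) (E : ℝ → Set B) : Prop :=
  (∀ ε : ℝ, 0 ≤ ε → A ⊆ E ε) ∧
    (∀ ε₁ ε₂ : ℝ, 0 ≤ ε₁ → ε₁ ≤ ε₂ → E ε₁ ⊆ E ε₂) ∧
      TransportationFormula q E ∧
        IsClosed {p : ℝ × B | 0 ≤ p.1 ∧ p.2 ∈ E p.1}

/-- Convexity for extended-real-valued functions. -/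
def ConvexE {B : Type*} [AddCommGroup B] [Module ℝ B] (f : B → EReal) : Prop :=
  ∀ x y : B, ∀ a b : ℝ, 0 ≤ a → 0 ≤ b → a + b = 1 →
    f (a • x + b • y) ≤ (a : EReal) * f x + (b : EReal) * f y

/-- The enlargement `A_h` associated to a representative function `h`. -/
def Ah {B : Type*} [AddCommGroup B] (q : B → ℝ) (h : B → EReal) (ε : ℝ) : Set B :=
  {b : B | h b ≤ (ε : EReal) + (q b : EReal)}

/-
Each axiom of `𝓔_c(A)` for the sublevel sets `A_h(ε) = {h ≤ ε + q}` is inherited from `h`: they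
contain `A` since `h = q` there, they are jointly closed since `h` is lower semicontinuous and
`q` continuous, and the transportation formula is convexity of `h` combined with the identity
`q(α₁b₁ + α₂b₂) = α₁ q b₁ + α₂ q b₂ - α₁α₂ q(b₁ - b₂)` for a quadratic form. As `h ≥ q`, the
least `ε` with `b ∈ A_h(ε)` is `h b - q b`, so `Λ_{A_h} = h`.
-/

open Set

lemma half_diag_smul_add_smul {M : Type*} [AddCommGroup M] [Module ℝ M]
    (brk : M →ₗ[ℝ] M →ₗ[ℝ] ℝ) {q : M → ℝ} (hq : ∀ b, q b = brk b b / 2)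
    {α₁ α₂ : ℝ} (hα : α₁ + α₂ = 1) (b₁ b₂ : M) :
    q (α₁ • b₁ + α₂ • b₂) = α₁ * q b₁ + α₂ * q b₂ - α₁ * α₂ * q (b₁ - b₂) := by
  obtain rfl : α₂ = 1 - α₁ := by linarith
  simp only [hq, map_add, map_sub, map_smul, LinearMap.add_apply, LinearMap.sub_apply,
    LinearMap.smul_apply, smul_eq_mul]
  ring

section Ah

variable {B : Type*} [AddCommGroup B] {q : B → ℝ} {h : B → EReal}

lemma mem_Ah_iff {ε : ℝ} {b : B} : b ∈ Ah q h ε ↔ h b ≤ ((ε + q b : ℝ) : EReal) := by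
  rw [EReal.coe_add]; rfl

lemma subset_Ah {A : Set B} (heq : ∀ b ∈ A, h b = q b) {ε : ℝ} (hε : 0 ≤ ε) :
    A ⊆ Ah q h ε := fun b hb => by
  rw [mem_Ah_iff, heq b hb, EReal.coe_le_coe_iff]
  linarith

lemma Ah_mono {ε₁ ε₂ : ℝ} (hε : ε₁ ≤ ε₂) : Ah q h ε₁ ⊆ Ah q h ε₂ :=
  fun _ hb => hb.trans (add_le_add_left (EReal.coe_le_coe_iff.2 hε) _)

lemma exists_coe_of_mem_Ah (hge : ∀ b, (q b : EReal) ≤ h b) {ε : ℝ} {b : B}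
    (hb : b ∈ Ah q h ε) : ∃ x : ℝ, h b = x ∧ x ≤ ε + q b := by
  rw [mem_Ah_iff] at hb
  obtain ⟨x, hx⟩ : ∃ x : ℝ, h b = x := ⟨(h b).toReal, (EReal.coe_toReal
    (hb.trans_lt (EReal.coe_lt_top _)).ne (ne_bot_of_le_ne_bot (EReal.coe_ne_bot _) (hge b))).symm⟩
  exact ⟨x, hx, EReal.coe_le_coe_iff.1 (hx ▸ hb)⟩

lemma transportationFormula_Ah [Module ℝ B] (brk : B →ₗ[ℝ] B →ₗ[ℝ] ℝ)
    (hq : ∀ b, q b = brk b b / 2) (hconv : ConvexE h) (hge : ∀ b, (q b : EReal) ≤ h b) :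
    TransportationFormula q (Ah q h) := by
  intro ε₁ ε₂ _ _ b₁ hb₁ b₂ hb₂ α₁ α₂ hα₁ hα₂ hα
  obtain ⟨x₁, hx₁, hx₁le⟩ := exists_coe_of_mem_Ah hge hb₁
  obtain ⟨x₂, hx₂, hx₂le⟩ := exists_coe_of_mem_Ah hge hb₂
  set b := α₁ • b₁ + α₂ • b₂
  set δ := α₁ * ε₁ + α₂ * ε₂ + α₁ * α₂ * q (b₁ - b₂)
  have hqb := half_diag_smul_add_smul brk hq hα b₁ b₂
  have hb : h b ≤ ((δ + q b : ℝ) : EReal) :=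
    calc h b ≤ α₁ * h b₁ + α₂ * h b₂ := hconv b₁ b₂ α₁ α₂ hα₁ hα₂ hα
      _ = ((α₁ * x₁ + α₂ * x₂ : ℝ) : EReal) := by rw [hx₁, hx₂]; norm_cast
      _ ≤ ((δ + q b : ℝ) : EReal) := EReal.coe_le_coe_iff.2 <| by
        nlinarith [mul_le_mul_of_nonneg_left hx₁le hα₁, mul_le_mul_of_nonneg_left hx₂le hα₂]
  have hδ : (q b : EReal) ≤ ((δ + q b : ℝ) : EReal) := (hge b).trans hb
  exact ⟨by linarith [EReal.coe_le_coe_iff.1 hδ], mem_Ah_iff.2 hb⟩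

lemma isClosed_Ah_graph [TopologicalSpace B] (hlsc : LowerSemicontinuous h)
    (hqc : Continuous q) : IsClosed {p : ℝ × B | 0 ≤ p.1 ∧ p.2 ∈ Ah q h p.1} := by
  have hepi := hlsc.isClosed_epigraph.preimage
    (f := fun p : ℝ × B => (p.2, ((p.1 + q p.2 : ℝ) : EReal)))
    (continuous_snd.prodMk (continuous_coe_real_ereal.comp (by fun_prop)))
  simp only [mem_Ah_iff]
  exact (isClosed_le continuous_const continuous_fst).inter hepi

lemma lamE_Ah_add (hge : ∀ b, (q b : EReal) ≤ h b) (b : B) :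
    lamE (Ah q h) b + q b = h b := by
  induction hb : h b using EReal.rec with
  | bot => simpa [hb] using hge b
  | top =>
    have hempty : {ε : ℝ | 0 ≤ ε ∧ b ∈ Ah q h ε} = ∅ :=
      eq_empty_of_forall_notMem fun ε hε =>
        EReal.coe_ne_top _ (top_le_iff.1 (hb ▸ mem_Ah_iff.1 hε.2))
    simp [lamE, hempty]
  | coe x =>
    have hset : {ε : ℝ | 0 ≤ ε ∧ b ∈ Ah q h ε} = Ici (x - q b) := by
      have := EReal.coe_le_coe_iff.1 (hb ▸ hge b)
      ext ε
      simp only [mem_ofPred_eq, mem_Ah_iff, hb, EReal.coe_le_coe_iff, mem_Ici]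
      constructor
      · rintro ⟨-, hε⟩
        linarith
      · intro hε
        exact ⟨by linarith, by linarith⟩
    rw [lamE, hset, IsLeast.csInf_eq (EReal.coe_strictMono.monotone.map_isLeast isLeast_Ici)]
    norm_cast
    ring

end Ah

theorem Ah_mem_closed_family_and_Lambda_eq_general
    (B : Type*) [NormedAddCommGroup B] [NormedSpace ℝ B]
    (brk : B →ₗ[ℝ] B →ₗ[ℝ] ℝ)
    (q : B → ℝ) (hq : ∀ b : B, q b = brk b b / 2)
    (ι : B →L[ℝ] (B →L[ℝ] ℝ)) (hι : ∀ b c : B, ι c b = brk b c)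
    (A : Set B)
    (h : B → EReal) (hconv : ConvexE h) (hlsc : LowerSemicontinuous h)
    (hge : ∀ b : B, (q b : EReal) ≤ h b) (heq : ∀ b ∈ A, h b = (q b : EReal)) :
    MemEnlFamilyClosed q A (Ah q h) ∧
      ∀ b : B, lamE (Ah q h) b + (q b : EReal) = h b := by
  have hqc : Continuous q := by
    have hq' : q = fun b => ι b b / 2 := funext fun b => by rw [hι, hq]
    rw [hq']
    fun_prop
  exact ⟨⟨fun _ hε => subset_Ah heq hε, fun _ _ _ hε => Ah_mono hε,
    transportationFormula_Ah brk hq hconv hge, isClosed_Ah_graph hlsc hqc⟩, lamE_Ah_add hge⟩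

theorem Ah_mem_closed_family_and_Lambda_eq
    (B : Type*) [NormedAddCommGroup B] [NormedSpace ℝ B] [CompleteSpace B] [Nontrivial B]
    (brk : B →ₗ[ℝ] B →ₗ[ℝ] ℝ) (hsym : ∀ b c : B, brk b c = brk c b)
    (q : B → ℝ) (hq : ∀ b : B, q b = brk b b / 2)
    (hpos : ∀ b : B, 0 ≤ (1 / 2) * ‖b‖ ^ 2 + q b)
    (ι : B →L[ℝ] (B →L[ℝ] ℝ)) (hι : ∀ b c : B, ι c b = brk b c)
    (A : Set B) (hA : MaxQPositive q A)
    (h : B → EReal) (hconv : ConvexE h) (hlsc : LowerSemicontinuous h)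
    (hge : ∀ b : B, (q b : EReal) ≤ h b) (heq : ∀ b ∈ A, h b = (q b : EReal)) :
    MemEnlFamilyClosed q A (Ah q h) ∧
      ∀ b : B, lamE (Ah q h) b + (q b : EReal) = h b :=
  Ah_mem_closed_family_and_Lambda_eq_general B brk q hq ι hι A h hconv hlsc hge heq
end

section
/- Let B be a Banach SSD space, A ⊆ B maximally q-positive and h ∈ 𝓗(A). Then A = {b ∈ B : h(b) = q(b)}. -/
/-!
A convex majorant `h` of a quadratic form `q` that touches `q` at `x` and `y` forces
`q (2⁻¹ • x + 2⁻¹ • y) ≤ 2⁻¹ * q x + 2⁻¹ * q y`, and by the parallelogram law this midpoint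
inequality is exactly `0 ≤ q (x - y)`. So the contact set `{h = q}` is `q`-positive; it contains
`A`, hence equals `A` by maximality.
-/

section

variable {M : Type*} [AddCommGroup M] [Module ℝ M]

theorem QuadraticMap.map_sub_add_four_mul_map_midpoint (Q : QuadraticMap ℝ M ℝ) (x y : M) :
    Q (x - y) + 4 * Q ((2⁻¹ : ℝ) • x + (2⁻¹ : ℝ) • y) = 2 * Q x + 2 * Q y := by
  have hadd : Q (x + y) = Q x + Q y + polar Q x y := QuadraticMap.map_add Q x y
  have hsub : Q (x - y) = Q x + Q y - polar Q x y := by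
    rw [sub_eq_add_neg, QuadraticMap.map_add Q, Q.map_neg, polar_neg_right, ← sub_eq_add_neg]
  rw [← smul_add, Q.map_smul, smul_eq_mul, hadd, hsub]
  ring

theorem ConvexE.map_sub_nonneg_of_eq {h : M → EReal} (hconv : ConvexE h)
    {Q : QuadraticMap ℝ M ℝ} (hge : ∀ x, (Q x : EReal) ≤ h x) {x y : M}
    (hx : h x = Q x) (hy : h y = Q y) : 0 ≤ Q (x - y) := by
  have hmid : Q ((2⁻¹ : ℝ) • x + (2⁻¹ : ℝ) • y) ≤ 2⁻¹ * Q x + 2⁻¹ * Q y := by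
    have := (hge _).trans (hconv x y 2⁻¹ 2⁻¹ (by norm_num) (by norm_num) (by norm_num))
    rw [hx, hy] at this
    exact_mod_cast this
  linarith [Q.map_sub_add_four_mul_map_midpoint x y]

theorem ConvexE.qPositive_setOf_eq {h : M → EReal} (hconv : ConvexE h)
    {Q : QuadraticMap ℝ M ℝ} (hge : ∀ x, (Q x : EReal) ≤ h x)
    (hne : {x | h x = Q x}.Nonempty) : QPositive Q {x | h x = Q x} :=
  ⟨hne, fun _ hx _ hy => hconv.map_sub_nonneg_of_eq hge hx hy⟩

end

theorem representative_determines_A_general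
    (B : Type*) [NormedAddCommGroup B] [NormedSpace ℝ B]
    (brk : B →ₗ[ℝ] B →ₗ[ℝ] ℝ)
    (q : B → ℝ) (hq : ∀ b : B, q b = brk b b / 2)
    (A : Set B) (hA : MaxQPositive q A)
    (h : B → EReal) (hconv : ConvexE h)
    (hge : ∀ b : B, (q b : EReal) ≤ h b) (heq : ∀ b ∈ A, h b = (q b : EReal)) :
    A = {b : B | h b = (q b : EReal)} := by
  have hq_eq : q = ⇑((2⁻¹ : ℝ) • LinearMap.BilinMap.toQuadraticMap brk) := by
    ext b
    simp [hq, div_eq_inv_mul]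
  rw [hq_eq] at hA hge heq ⊢
  have hA_sub : A ⊆ {b | h b = _} := heq
  exact (hA.2 _ (hconv.qPositive_setOf_eq hge (hA.1.1.mono hA_sub)) hA_sub).symm

theorem representative_determines_A
    (B : Type*) [NormedAddCommGroup B] [NormedSpace ℝ B] [CompleteSpace B] [Nontrivial B]
    (brk : B →ₗ[ℝ] B →ₗ[ℝ] ℝ) (hsym : ∀ b c : B, brk b c = brk c b)
    (q : B → ℝ) (hq : ∀ b : B, q b = brk b b / 2)
    (hpos : ∀ b : B, 0 ≤ (1 / 2) * ‖b‖ ^ 2 + q b)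
    (ι : B →L[ℝ] (B →L[ℝ] ℝ)) (hι : ∀ b c : B, ι c b = brk b c)
    (A : Set B) (hA : MaxQPositive q A)
    (h : B → EReal) (hconv : ConvexE h) (hlsc : LowerSemicontinuous h)
    (hge : ∀ b : B, (q b : EReal) ≤ h b) (heq : ∀ b ∈ A, h b = (q b : EReal)) :
    A = {b : B | h b = (q b : EReal)} :=
  representative_determines_A_general B brk q hq A hA h hconv hge heq
end

section
/- Let B be a Banach SSD space, A ⊆ B maximally q-positive, E ∈ 𝓔_c(A), ε₁, ε₂ ≥ 0, b¹ ∈ E(ε₁), b² ∈ E(ε₂). Then q(b¹ − b²) ≥ −(√ε₁ + √ε₂)². -/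
/-!
The first clause of the transportation formula says `t ε₁ + (1 - t) ε₂ + t (1 - t) q(b₁ - b₂) ≥ 0`
for every `t ∈ [0, 1]`. Writing `εᵢ = aᵢ²` and taking
`t = a₂ / (a₁ + a₂)`, this expression equals `a₁ a₂ ((a₁ + a₂)² + q(b₁ - b₂)) / (a₁ + a₂)²`, which
gives the bound when `a₁, a₂ > 0`; the degenerate cases follow by letting `aᵢ + δ` tend to `aᵢ`.
-/

open Set Filter Topology

lemma neg_sq_add_le_of_pos_of_forall_mem_Icc {a b Q : ℝ} (ha : 0 < a) (hb : 0 < b)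
    (h : ∀ t ∈ Icc (0 : ℝ) 1, 0 ≤ t * a ^ 2 + (1 - t) * b ^ 2 + t * (1 - t) * Q) :
    -(a + b) ^ 2 ≤ Q := by
  have hs : 0 < a + b := add_pos ha hb
  have hval : b / (a + b) * a ^ 2 + (1 - b / (a + b)) * b ^ 2
      + b / (a + b) * (1 - b / (a + b)) * Q = a * b / (a + b) ^ 2 * ((a + b) ^ 2 + Q) := by
    field_simp
    ring
  have ht : b / (a + b) ∈ Icc (0 : ℝ) 1 :=
    ⟨by positivity, (div_le_one hs).2 (by linarith)⟩
  have hnonneg := h _ ht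
  rw [hval, mul_nonneg_iff_of_pos_left (by positivity)] at hnonneg
  linarith

lemma neg_sq_add_le_of_forall_mem_Icc {a b Q : ℝ} (ha : 0 ≤ a) (hb : 0 ≤ b)
    (h : ∀ t ∈ Icc (0 : ℝ) 1, 0 ≤ t * a ^ 2 + (1 - t) * b ^ 2 + t * (1 - t) * Q) :
    -(a + b) ^ 2 ≤ Q := by
  have hperturbed : ∀ δ > 0, -((a + δ) + (b + δ)) ^ 2 ≤ Q := by
    intro δ hδ
    refine neg_sq_add_le_of_pos_of_forall_mem_Icc (by linarith) (by linarith) fun t ht => ?_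
    have := h t ht
    have h1t : 0 ≤ 1 - t := by linarith [ht.2]
    nlinarith [ht.1, mul_nonneg ht.1 (by positivity : (0 : ℝ) ≤ 2 * a * δ + δ ^ 2),
      mul_nonneg h1t (by positivity : (0 : ℝ) ≤ 2 * b * δ + δ ^ 2)]
  have hlim : Tendsto (fun δ : ℝ => -((a + δ) + (b + δ)) ^ 2) (𝓝[>] 0) (𝓝 (-(a + b) ^ 2)) := by
    have hcont : Continuous fun δ : ℝ => -((a + δ) + (b + δ)) ^ 2 := by fun_prop
    simpa using (hcont.tendsto 0).mono_left nhdsWithin_le_nhds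
  exact le_of_tendsto hlim (eventually_nhdsWithin_of_forall hperturbed)

namespace TransportationFormula

variable {B : Type*} [AddCommGroup B] [Module ℝ B] {q : B → ℝ} {E : ℝ → Set B}

lemma nonneg_convex_combination (hE : TransportationFormula q E) {ε₁ ε₂ : ℝ}
    (hε₁ : 0 ≤ ε₁) (hε₂ : 0 ≤ ε₂) {b₁ b₂ : B} (hb₁ : b₁ ∈ E ε₁) (hb₂ : b₂ ∈ E ε₂) :
    ∀ t ∈ Icc (0 : ℝ) 1, 0 ≤ t * ε₁ + (1 - t) * ε₂ + t * (1 - t) * q (b₁ - b₂) :=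
  fun t ht => (hE ε₁ ε₂ hε₁ hε₂ b₁ hb₁ b₂ hb₂ t (1 - t) ht.1 (by linarith [ht.2])
    (by ring)).1

lemma neg_sq_sqrt_add_sqrt_le (hE : TransportationFormula q E) {ε₁ ε₂ : ℝ}
    (hε₁ : 0 ≤ ε₁) (hε₂ : 0 ≤ ε₂) {b₁ b₂ : B} (hb₁ : b₁ ∈ E ε₁) (hb₂ : b₂ ∈ E ε₂) :
    -(Real.sqrt ε₁ + Real.sqrt ε₂) ^ 2 ≤ q (b₁ - b₂) := by
  refine neg_sq_add_le_of_forall_mem_Icc (Real.sqrt_nonneg _) (Real.sqrt_nonneg _) ?_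
  rw [Real.sq_sqrt hε₁, Real.sq_sqrt hε₂]
  exact hE.nonneg_convex_combination hε₁ hε₂ hb₁ hb₂

end TransportationFormula

theorem closed_enlargement_lower_bound_general
    (B : Type*) [NormedAddCommGroup B] [NormedSpace ℝ B]
    (q : B → ℝ)
    (A : Set B)
    (E : ℝ → Set B) (hE : MemEnlFamilyClosed q A E)
    (ε₁ ε₂ : ℝ) (hε₁ : 0 ≤ ε₁) (hε₂ : 0 ≤ ε₂)
    (b₁ b₂ : B) (hb₁ : b₁ ∈ E ε₁) (hb₂ : b₂ ∈ E ε₂) :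
    -(Real.sqrt ε₁ + Real.sqrt ε₂) ^ 2 ≤ q (b₁ - b₂) :=
  hE.2.2.1.neg_sq_sqrt_add_sqrt_le hε₁ hε₂ hb₁ hb₂

theorem closed_enlargement_lower_bound
    (B : Type*) [NormedAddCommGroup B] [NormedSpace ℝ B] [CompleteSpace B] [Nontrivial B]
    (brk : B →ₗ[ℝ] B →ₗ[ℝ] ℝ) (hsym : ∀ b c : B, brk b c = brk c b)
    (q : B → ℝ) (hq : ∀ b : B, q b = brk b b / 2)
    (hpos : ∀ b : B, 0 ≤ (1 / 2) * ‖b‖ ^ 2 + q b)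
    (ι : B →L[ℝ] (B →L[ℝ] ℝ)) (hι : ∀ b c : B, ι c b = brk b c)
    (A : Set B) (hA : MaxQPositive q A)
    (E : ℝ → Set B) (hE : MemEnlFamilyClosed q A E)
    (ε₁ ε₂ : ℝ) (hε₁ : 0 ≤ ε₁) (hε₂ : 0 ≤ ε₂)
    (b₁ b₂ : B) (hb₁ : b₁ ∈ E ε₁) (hb₂ : b₂ ∈ E ε₂) :
    -(Real.sqrt ε₁ + Real.sqrt ε₂) ^ 2 ≤ q (b₁ - b₂) :=
  closed_enlargement_lower_bound_general B q A E hE ε₁ ε₂ hε₁ hε₂ b₁ b₂ hb₁ hb₂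
end

section
/- Let B be a Banach SSD space, A ⊆ B maximally q-positive, and E ∈ 𝓔_c(A). Then E is additive (i.e. q(b¹−b²) ≥ −(ε₁+ε₂) whenever b¹ ∈ E(ε₁), b² ∈ E(ε₂), ε₁,ε₂ ≥ 0) if and only if Λ_E^@ ≤ Λ_E on B, where Λ_E^@(c) = sup_{b∈B}{⌊b,c⌋ − Λ_E(b)}. -/
def IsAdditiveEnl {B : Type*} [AddCommGroup B] (q : B → ℝ) (E : ℝ → Set B) : Prop :=
  ∀ ε₁ ε₂ : ℝ, 0 ≤ ε₁ → 0 ≤ ε₂ → ∀ b₁ ∈ E ε₁, ∀ b₂ ∈ E ε₂, -(ε₁ + ε₂) ≤ q (b₁ - b₂)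

section lamE

variable {B : Type*} {E : ℝ → Set B} {b : B}

theorem lamE_le {ε : ℝ} (hε : 0 ≤ ε) (hb : b ∈ E ε) : lamE E b ≤ ε :=
  sInf_le ⟨ε, ⟨hε, hb⟩, rfl⟩

theorem zero_le_lamE : 0 ≤ lamE E b :=
  le_sInf <| by rintro _ ⟨ε, ⟨hε, -⟩, rfl⟩; exact EReal.coe_nonneg.mpr hε

theorem lamE_ne_bot : lamE E b ≠ ⊥ :=
  ne_bot_of_le_ne_bot EReal.zero_ne_bot zero_le_lamE

theorem lamE_eq_top (h : ¬∃ ε, 0 ≤ ε ∧ b ∈ E ε) : lamE E b = ⊤ := by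
  rw [lamE, sInf_eq_top]
  rintro _ ⟨ε, hε, rfl⟩
  exact absurd ⟨ε, hε⟩ h

theorem exists_mem_lamE_eq_of_isClosed [TopologicalSpace B]
    (hE : IsClosed {p : ℝ × B | 0 ≤ p.1 ∧ p.2 ∈ E p.1}) (h : ∃ ε, 0 ≤ ε ∧ b ∈ E ε) :
    ∃ ε, 0 ≤ ε ∧ b ∈ E ε ∧ lamE E b = ε := by
  set S := {ε : ℝ | 0 ≤ ε ∧ b ∈ E ε}
  have hSb : BddBelow S := ⟨0, fun _ hε => hε.1⟩
  have hS : IsClosed S := hE.preimage (continuous_id.prodMk continuous_const)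
  obtain ⟨hε₀, hb₀⟩ : sInf S ∈ S := hS.csInf_mem h hSb
  refine ⟨sInf S, hε₀, hb₀, le_antisymm (lamE_le hε₀ hb₀) (le_sInf ?_)⟩
  rintro _ ⟨ε, hε, rfl⟩
  exact EReal.coe_le_coe_iff.mpr (csInf_le hSb hε)

end lamE

theorem isAdditiveEnl_iff {B : Type*} [AddCommGroup B] [TopologicalSpace B] {q : B → ℝ}
    {E : ℝ → Set B} (hE : IsClosed {p : ℝ × B | 0 ≤ p.1 ∧ p.2 ∈ E p.1}) :
    IsAdditiveEnl q E ↔ ∀ b c, -(lamE E b + lamE E c) ≤ q (b - c) := by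
  constructor
  · intro hadd b c
    by_cases hb : ∃ ε, 0 ≤ ε ∧ b ∈ E ε
    · by_cases hc : ∃ ε, 0 ≤ ε ∧ c ∈ E ε
      · obtain ⟨εb, hεb, hbE, hlamb⟩ := exists_mem_lamE_eq_of_isClosed hE hb
        obtain ⟨εc, hεc, hcE, hlamc⟩ := exists_mem_lamE_eq_of_isClosed hE hc
        rw [hlamb, hlamc]
        exact_mod_cast hadd εb εc hεb hεc b hbE c hcE
      · rw [lamE_eq_top hc, EReal.add_top_of_ne_bot lamE_ne_bot, EReal.neg_top]
        exact bot_le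
    · rw [lamE_eq_top hb, EReal.top_add_of_ne_bot lamE_ne_bot, EReal.neg_top]
      exact bot_le
  · intro h ε₁ ε₂ hε₁ hε₂ b₁ hb₁ b₂ hb₂
    have : -((ε₁ : EReal) + ε₂) ≤ q (b₁ - b₂) :=
      (EReal.neg_le_neg_iff.mpr (add_le_add (lamE_le hε₁ hb₁) (lamE_le hε₂ hb₂))).trans (h b₁ b₂)
    exact_mod_cast this

theorem EReal.coe_sub_add_le_add_iff {a c : EReal} (ha : a ≠ ⊥) (hc : c ≠ ⊥) (x u v : ℝ) :
    (x : EReal) - (a + u) ≤ c + v ↔ -(a + c) ≤ ((u + v - x : ℝ) : EReal) := by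
  induction a using EReal.rec with
  | bot => exact absurd rfl ha
  | top => simp [EReal.top_add_of_ne_bot hc]
  | coe a =>
    induction c using EReal.rec with
    | bot => exact absurd rfl hc
    | top => simp
    | coe c =>
      norm_cast
      constructor <;> intro <;> linarith

theorem q_sub_eq_add_sub_brk {B : Type*} [AddCommGroup B] [Module ℝ B] {brk : B →ₗ[ℝ] B →ₗ[ℝ] ℝ}
    (hsym : ∀ b c : B, brk b c = brk c b) {q : B → ℝ} (hq : ∀ b : B, q b = brk b b / 2)
    (b c : B) : q (b - c) = q b + q c - brk b c := by
  simp only [hq, map_sub, LinearMap.sub_apply, hsym c b]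
  ring

theorem additive_iff_conjugate_le_general
    (B : Type*) [NormedAddCommGroup B] [NormedSpace ℝ B]
    (brk : B →ₗ[ℝ] B →ₗ[ℝ] ℝ) (hsym : ∀ b c : B, brk b c = brk c b)
    (q : B → ℝ) (hq : ∀ b : B, q b = brk b b / 2)
    (A : Set B)
    (E : ℝ → Set B) (hE : MemEnlFamilyClosed q A E) :
    (∀ ε₁ ε₂ : ℝ, 0 ≤ ε₁ → 0 ≤ ε₂ → ∀ b₁ ∈ E ε₁, ∀ b₂ ∈ E ε₂,
        -(ε₁ + ε₂) ≤ q (b₁ - b₂)) ↔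
      ∀ c : B, (⨆ b : B, ((brk b c : ℝ) : EReal) - (lamE E b + (q b : EReal))) ≤
        lamE E c + (q c : EReal) := by
  refine (isAdditiveEnl_iff hE.2.2.2).trans ?_
  simp only [iSup_le_iff]
  refine forall_comm.trans (forall_congr' fun c => forall_congr' fun b => ?_)
  rw [EReal.coe_sub_add_le_add_iff lamE_ne_bot lamE_ne_bot, q_sub_eq_add_sub_brk hsym hq]

theorem additive_iff_conjugate_le
    (B : Type*) [NormedAddCommGroup B] [NormedSpace ℝ B] [CompleteSpace B] [Nontrivial B]
    (brk : B →ₗ[ℝ] B →ₗ[ℝ] ℝ) (hsym : ∀ b c : B, brk b c = brk c b)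
    (q : B → ℝ) (hq : ∀ b : B, q b = brk b b / 2)
    (hpos : ∀ b : B, 0 ≤ (1 / 2) * ‖b‖ ^ 2 + q b)
    (ι : B →L[ℝ] (B →L[ℝ] ℝ)) (hι : ∀ b c : B, ι c b = brk b c)
    (A : Set B) (hA : MaxQPositive q A)
    (E : ℝ → Set B) (hE : MemEnlFamilyClosed q A E) :
    (∀ ε₁ ε₂ : ℝ, 0 ≤ ε₁ → 0 ≤ ε₂ → ∀ b₁ ∈ E ε₁, ∀ b₂ ∈ E ε₂,
        -(ε₁ + ε₂) ≤ q (b₁ - b₂)) ↔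
      ∀ c : B, (⨆ b : B, ((brk b c : ℝ) : EReal) - (lamE E b + (q b : EReal))) ≤
        lamE E c + (q c : EReal) :=
  additive_iff_conjugate_le_general B brk hsym q hq A E hE
end
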